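/- arXiv:1502.01789 — 3 statements merged into one kernel-verified Lean document; each statement's English description precedes it below -/
import Mathlib

section
/- For a 2-dimensional symplectic space (V,J) ≅ (ℚ_p², det), with Lagrangian lines ℓ_a = {(x, ax)}, ℓ_b = {(y, by)}, ℓ_c = {(z, cz)} for pairwise distinct a, b, c ∈ ℚ_p, the quadratic form Q(z₁,z₂,z₃) = J(z₁,z₂) + J(z₂,z₃) + J(z₃,z₁) on ℓ_a ⊕ ℓ_b ⊕ ℓ_c diagonalizes as Q = ((b-a)/4)(y-z+x)² + ((c-b)/4)(z-x+y)² + ((a-c)/4)(x-y+z)², and has determinant 1/(a-b) + 1/(b-c) in ℚ_p^×/(ℚ_p^×)² and Hasse invariant (b-a, c-b)_p (c-b, a-c)_p (b-a, a-c)_p. -/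
open Classical

/-- The Hilbert symbol on `ℚ_p`: `(a,b)_p = 1` iff `z² = ax² + by²` has a nontrivial
solution, and `-1` otherwise. -/
noncomputable def hilbertSym (p : ℕ) [Fact p.Prime] (a b : ℚ_[p]) : ℤ :=
  if ∃ x y z : ℚ_[p], ¬(x = 0 ∧ y = 0 ∧ z = 0) ∧ z ^ 2 = a * x ^ 2 + b * y ^ 2 then 1 else -1

/-- The standard symplectic form on `ℚ_p²`. -/
noncomputable def Jstd (p : ℕ) [Fact p.Prime] (u v : ℚ_[p] × ℚ_[p]) : ℚ_[p] := u.1 * v.2 - u.2 * v.1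

/-!
The diagonalization is a polynomial identity. The Gram matrix of `Q` has zero diagonal and
off-diagonal entries `u, v, w`, so its determinant is `2uvw = (b-a)(c-b)(a-c)/4`, which is
`(1/(a-b) + 1/(b-c)) · ((a-b)(b-c)/2)²`. The Hilbert symbol only depends on square classes, so
the factors `1/4 = (1/2)²` of the diagonal coefficients do not change the Hasse invariant.
-/

theorem hilbertSym_mul_sq (p : ℕ) [Fact p.Prime] (a b : ℚ_[p]) {s t : ℚ_[p]} (hs : s ≠ 0)
    (ht : t ≠ 0) : hilbertSym p (a * s ^ 2) (b * t ^ 2) = hilbertSym p a b := by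
  refine if_congr ⟨?_, ?_⟩ rfl rfl
  · rintro ⟨x, y, z, hxyz, h⟩
    refine ⟨x * s, y * t, z, ?_, by rw [h]; ring⟩
    simpa [hs, ht] using hxyz
  · rintro ⟨x, y, z, hxyz, h⟩
    refine ⟨x / s, y / t, z, ?_, by rw [h]; field_simp⟩
    simpa [hs, ht] using hxyz

theorem Matrix.det_fin_three_of_diag_eq_zero {R : Type*} [CommRing R] (u v w : R) :
    !![0, u, v; u, 0, w; v, w, 0].det = 2 * u * v * w := by
  rw [Matrix.det_fin_three]
  simp only [Matrix.of_apply, Matrix.cons_val', Matrix.cons_val_zero, Matrix.cons_val_one,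
    Matrix.cons_val_two, Matrix.empty_val', Matrix.cons_val_fin_one,
    Matrix.tail_cons, Matrix.vecHead]
  ring

theorem lagrangian_triple_quadratic_form_general (p : ℕ) [Fact p.Prime] (a b c : ℚ_[p])
    (hab : a ≠ b) (hbc : b ≠ c) :
    (∀ x y z : ℚ_[p],
      Jstd p (x, a * x) (y, b * y) + Jstd p (y, b * y) (z, c * z)
          + Jstd p (z, c * z) (x, a * x)
        = (b - a) / 4 * (y - z + x) ^ 2 + (c - b) / 4 * (z - x + y) ^ 2
          + (a - c) / 4 * (x - y + z) ^ 2) ∧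
    (∃ s : ℚ_[p], s ≠ 0 ∧
      (Matrix.det !![0, (b - a) / 2, (a - c) / 2;
                     (b - a) / 2, 0, (c - b) / 2;
                     (a - c) / 2, (c - b) / 2, 0])
        = (1 / (a - b) + 1 / (b - c)) * s ^ 2) ∧
    (hilbertSym p ((b - a) / 4) ((c - b) / 4) * hilbertSym p ((c - b) / 4) ((a - c) / 4)
        * hilbertSym p ((b - a) / 4) ((a - c) / 4)
      = hilbertSym p (b - a) (c - b) * hilbertSym p (c - b) (a - c)
        * hilbertSym p (b - a) (a - c)) := by
  have hab' : a - b ≠ 0 := sub_ne_zero.mpr hab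
  have hbc' : b - c ≠ 0 := sub_ne_zero.mpr hbc
  have quarter (d e : ℚ_[p]) : hilbertSym p (d / 4) (e / 4) = hilbertSym p d e := by
    have div_four (f : ℚ_[p]) : f / 4 = f * 2⁻¹ ^ 2 := by ring
    rw [div_four, div_four, hilbertSym_mul_sq p d e (by norm_num) (by norm_num)]
  refine ⟨fun x y z => by simp only [Jstd]; ring,
    ⟨(a - b) * (b - c) / 2, div_ne_zero (mul_ne_zero hab' hbc') two_ne_zero, ?_⟩, ?_⟩
  · rw [Matrix.det_fin_three_of_diag_eq_zero]
    field_simp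
    ring
  · rw [quarter, quarter, quarter]

/-- For Lagrangian lines `ℓ_a, ℓ_b, ℓ_c` (pairwise distinct slopes) in `(ℚ_p², det)`,
the form `Q(z₁,z₂,z₃) = J(z₁,z₂)+J(z₂,z₃)+J(z₃,z₁)` diagonalizes as
`((b-a)/4)(y-z+x)² + ((c-b)/4)(z-x+y)² + ((a-c)/4)(x-y+z)²`, has determinant
`1/(a-b) + 1/(b-c)` modulo squares, and Hasse invariant
`(b-a,c-b)_p (c-b,a-c)_p (b-a,a-c)_p`. -/
theorem lagrangian_triple_quadratic_form (p : ℕ) [Fact p.Prime] (a b c : ℚ_[p])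
    (hab : a ≠ b) (hbc : b ≠ c) (hac : a ≠ c) :
    (∀ x y z : ℚ_[p],
      Jstd p (x, a * x) (y, b * y) + Jstd p (y, b * y) (z, c * z)
          + Jstd p (z, c * z) (x, a * x)
        = (b - a) / 4 * (y - z + x) ^ 2 + (c - b) / 4 * (z - x + y) ^ 2
          + (a - c) / 4 * (x - y + z) ^ 2) ∧
    (∃ s : ℚ_[p], s ≠ 0 ∧
      (Matrix.det !![0, (b - a) / 2, (a - c) / 2;
                     (b - a) / 2, 0, (c - b) / 2;
                     (a - c) / 2, (c - b) / 2, 0])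
        = (1 / (a - b) + 1 / (b - c)) * s ^ 2) ∧
    (hilbertSym p ((b - a) / 4) ((c - b) / 4) * hilbertSym p ((c - b) / 4) ((a - c) / 4)
        * hilbertSym p ((b - a) / 4) ((a - c) / 4)
      = hilbertSym p (b - a) (c - b) * hilbertSym p (c - b) (a - c)
        * hilbertSym p (b - a) (a - c)) :=
  lagrangian_triple_quadratic_form_general p a b c hab hbc
end

section
/- The Schrödinger representation of the p-adic Heisenberg group on 𝒟(ℚ_p^n) (locally constant compactly supported complex functions) is irreducible: any nonzero subspace of 𝒟(ℚ_p^n) invariant under all operators T_z[ψ](ξ) = ψ(ξ+x)χ(∑_i (y_i ξ_i + x_i y_i /2)), for z = (x,y) ∈ ℚ_p^{2n}, equals 𝒟(ℚ_p^n). -/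
/-!
The character `χ(x) = e^{2πi[x]}` is additive with kernel `ℤ_p`, because `χ(x) = e^{2πiq}` for
every `q ∈ ℤ[1/p]` with `x - q ∈ ℤ_p` (two such `q` differ by an integer). Hence, for `‖η‖ ≤ p^k`,
the character sum `∑_{a ∈ [0, p^k)^n} χ(a·η)` is `p^{kn}` if `η ∈ ℤ_p^n` and `0` otherwise.
If `f(ξ₀) ≠ 0` and `f` is constant near `ξ₀`, averaging the modulations `T_{(0,at)} f` with weights
`χ(-a·tξ₀)` therefore gives a nonzero multiple of the indicator of the ball `B(ξ₀, ‖t‖⁻¹)`, and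
translations move that ball anywhere. Closed balls of one radius in an ultrametric space are equal
or disjoint, so a locally constant compactly supported function is a finite combination of
indicators of small enough balls.
-/
open Classical

/-- The p-adic fractional part of `x`. -/
noncomputable def padicFract (p : ℕ) [Fact p.Prime] (x : ℚ_[p]) : ℚ :=
  if h : ∃ r : ℚ, 0 ≤ r ∧ r < 1 ∧ (∃ k : ℕ, ∃ m : ℤ, r * (p : ℚ) ^ k = (m : ℚ)) ∧
      ‖x - (r : ℚ_[p])‖ ≤ 1 then h.choose else 0

/-- The standard additive character `χ(x) = exp(2πi[x])` of `ℚ_p`. -/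
noncomputable def stdChar (p : ℕ) [Fact p.Prime] (x : ℚ_[p]) : ℂ :=
  Complex.exp (2 * Real.pi * Complex.I * (padicFract p x : ℂ))

/-- The Heisenberg/Schrödinger operator
`T_{(x,y)}[ψ](ξ) = ψ(ξ+x) χ(∑ᵢ (yᵢξᵢ + xᵢyᵢ/2))` on functions `ℚ_p^n → ℂ`. -/
noncomputable def heisenbergOp (p : ℕ) [Fact p.Prime] (n : ℕ)
    (x y : Fin n → ℚ_[p]) (ψ : (Fin n → ℚ_[p]) → ℂ) : (Fin n → ℚ_[p]) → ℂ :=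
  fun ξ => ψ (ξ + x) * stdChar p (∑ i, (y i * ξ i + x i * y i / 2))

open Finset Metric

theorem IsLocallyConstant.mem_of_hasCompactSupport {X R : Type*} [PseudoMetricSpace X]
    [IsUltrametricDist X] [Semiring R] {V : Submodule R (X → R)}
    (hV : ∀ ε > 0, ∃ r, 0 < r ∧ r < ε ∧ ∀ c, (closedBall c r).indicator 1 ∈ V)
    {h : X → R} (hlc : IsLocallyConstant h) (hcs : HasCompactSupport h) : h ∈ V := by
  obtain ⟨δ, hδ, hleb⟩ := lebesgue_number_lemma_of_metric hcs (fun w => hlc.isOpen_fiber (h w))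
    fun x _ => Set.mem_iUnion.2 ⟨x, rfl⟩
  obtain ⟨r, hr, hrδ, hind⟩ := hV δ hδ
  have hconst : ∀ c ∈ tsupport h, ∀ ξ ∈ closedBall c r, h ξ = h c := by
    intro c hc ξ hξ
    obtain ⟨w, hw⟩ := hleb c hc
    exact (hw (closedBall_subset_ball hrδ hξ)).trans (hw (mem_ball_self hδ)).symm
  obtain ⟨t, hts, hcover⟩ :=
    hcs.elim_nhds_subcover (fun c => closedBall c r) fun c _ => closedBall_mem_nhds c hr
  classical
  set balls := t.image fun c => closedBall c r
  have hdisj : (balls : Set (Set X)).PairwiseDisjoint id := by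
    intro B hB B' hB' hne
    obtain ⟨c, -, rfl⟩ := mem_image.1 hB
    obtain ⟨c', -, rfl⟩ := mem_image.1 hB'
    exact (IsUltrametricDist.closedBall_eq_or_disjoint c c' r).resolve_left hne
  have hsum : ∑ B ∈ balls, B.indicator h = h := by
    ext ξ
    rw [Finset.sum_apply]
    refine (indicator_biUnion_apply balls id hdisj ξ).symm.trans ?_
    rw [Set.indicator_eq_self.2]
    rw [set_biUnion_finset_image]
    exact (subset_tsupport h).trans hcover
  rw [← hsum]
  refine V.sum_mem fun B hB => ?_
  obtain ⟨c, hc, rfl⟩ := mem_image.1 hB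
  have : (closedBall c r).indicator h = h c • (closedBall c r).indicator 1 := by
    ext ξ
    by_cases hξ : ξ ∈ closedBall c r <;> simp [hξ, hconst c (hts c hc) ξ]
  rw [this]
  exact V.smul_mem _ (hind c)

namespace PadicSchrodinger

def HasPPowDenom (p : ℕ) (q : ℚ) : Prop := ∃ k : ℕ, ∃ m : ℤ, q * (p : ℚ) ^ k = m

variable {p : ℕ}

lemma HasPPowDenom.add {q q' : ℚ} (h : HasPPowDenom p q) (h' : HasPPowDenom p q') :
    HasPPowDenom p (q + q') := by
  obtain ⟨k, m, hk⟩ := h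
  obtain ⟨k', m', hk'⟩ := h'
  refine ⟨k + k', m * p ^ k' + m' * p ^ k, ?_⟩
  push_cast
  rw [← hk, ← hk']
  ring

lemma HasPPowDenom.neg {q : ℚ} (h : HasPPowDenom p q) : HasPPowDenom p (-q) := by
  obtain ⟨k, m, hk⟩ := h
  exact ⟨k, -m, by push_cast; rw [← hk]; ring⟩

variable [hp : Fact p.Prime]

lemma HasPPowDenom.exists_eq_intCast {q : ℚ} (h : HasPPowDenom p q) (hq : ‖(q : ℚ_[p])‖ ≤ 1) :
    ∃ z : ℤ, q = z := by
  obtain ⟨k, m, hk⟩ := h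
  have hm : ‖(m : ℚ_[p])‖ ≤ (p : ℝ) ^ (-(k : ℤ)) := by
    have : (m : ℚ_[p]) = (q : ℚ_[p]) * (p : ℚ_[p]) ^ k := by exact_mod_cast hk.symm
    rw [this, norm_mul, Padic.norm_p_pow]
    exact mul_le_of_le_one_left (by positivity) hq
  obtain ⟨z, rfl⟩ := (Padic.norm_int_le_pow_iff_dvd m k).mp hm
  refine ⟨z, mul_right_cancel₀ (pow_ne_zero k (Nat.cast_ne_zero.mpr hp.out.ne_zero)) ?_⟩
  rw [hk]
  push_cast
  ring

lemma exists_padicFract_spec (x : ℚ_[p]) :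
    ∃ r : ℚ, 0 ≤ r ∧ r < 1 ∧ HasPPowDenom p r ∧ ‖x - (r : ℚ_[p])‖ ≤ 1 := by
  have hpR : (0 : ℝ) < p := by exact_mod_cast hp.out.pos
  have hpQ : (0 : ℚ) < p := by exact_mod_cast hp.out.pos
  have hpQp : (p : ℚ_[p]) ≠ 0 := by exact_mod_cast hp.out.ne_zero
  obtain ⟨ν, hν⟩ := pow_unbounded_of_one_lt ‖x‖ (Nat.one_lt_cast.mpr hp.out.one_lt)
  have hy : ‖(p : ℚ_[p]) ^ ν * x‖ ≤ 1 := by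
    rw [norm_mul, Padic.norm_p_pow, zpow_neg, zpow_natCast, inv_mul_le_one₀ (pow_pos hpR ν)]
    exact hν.le
  set a := PadicInt.appr ⟨_, hy⟩ ν
  refine ⟨a / p ^ ν, by positivity, ?_, ⟨ν, a, ?_⟩, ?_⟩
  · rw [div_lt_one (pow_pos hpQ ν)]
    exact_mod_cast PadicInt.appr_lt _ ν
  · rw [div_mul_cancel₀ _ (pow_pos hpQ ν).ne']
    rfl
  · have happr := (PadicInt.norm_le_pow_iff_mem_span_pow _ ν).mpr (PadicInt.appr_spec ν ⟨_, hy⟩)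
    rw [PadicInt.norm_def] at happr
    push_cast at happr ⊢
    rw [show x - a / (p : ℚ_[p]) ^ ν = ((p : ℚ_[p]) ^ ν * x - a) / (p : ℚ_[p]) ^ ν by
      field_simp, norm_div, Padic.norm_p_pow, div_le_one (zpow_pos hpR _)]
    exact happr

lemma padicFract_spec (x : ℚ_[p]) :
    0 ≤ padicFract p x ∧ padicFract p x < 1 ∧ HasPPowDenom p (padicFract p x) ∧
      ‖x - (padicFract p x : ℚ_[p])‖ ≤ 1 := by
  have h := exists_padicFract_spec x
  unfold HasPPowDenom at h ⊢
  rw [padicFract, dif_pos h]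
  exact h.choose_spec

lemma stdChar_eq_exp {x : ℚ_[p]} {q : ℚ} (hq : HasPPowDenom p q) (hx : ‖x - (q : ℚ_[p])‖ ≤ 1) :
    stdChar p x = Complex.exp (2 * Real.pi * Complex.I * q) := by
  obtain ⟨-, -, hr, hxr⟩ := padicFract_spec x
  obtain ⟨z, hz⟩ := (hr.add hq.neg).exists_eq_intCast <| by
    have : ((padicFract p x + -q : ℚ) : ℚ_[p]) = (x - q) + (padicFract p x - x) := by push_cast; ring
    rw [this]
    exact (IsUltrametricDist.norm_add_le_max _ _).trans (max_le hx (norm_sub_rev x _ ▸ hxr))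
  rw [stdChar, Complex.exp_eq_exp_iff_exists_int]
  refine ⟨z, ?_⟩
  rw [show (padicFract p x : ℂ) = q + z by exact_mod_cast (by linarith : padicFract p x = q + z)]
  ring

lemma stdChar_add (x y : ℚ_[p]) : stdChar p (x + y) = stdChar p x * stdChar p y := by
  obtain ⟨-, -, hr, hxr⟩ := padicFract_spec x
  obtain ⟨-, -, hs, hys⟩ := padicFract_spec y
  rw [stdChar_eq_exp (hr.add hs), stdChar, stdChar, ← Complex.exp_add]
  · push_cast
    congr 1
    ring
  · push_cast
    rw [add_sub_add_comm]
    exact (IsUltrametricDist.norm_add_le_max _ _).trans (max_le hxr hys)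

lemma stdChar_eq_one_iff (x : ℚ_[p]) : stdChar p x = 1 ↔ ‖x‖ ≤ 1 := by
  refine ⟨fun h => ?_, fun h => by simpa using stdChar_eq_exp (q := 0) ⟨0, 0, by simp⟩ (by simpa)⟩
  obtain ⟨h0, h1, -, hx⟩ := padicFract_spec x
  obtain ⟨z, hz⟩ := Complex.exp_eq_one_iff.mp h
  have hrz : padicFract p x = z := by
    have : (padicFract p x : ℂ) = z := by
      apply mul_left_cancel₀ (by simp [Real.pi_ne_zero] : 2 * (Real.pi : ℂ) * Complex.I ≠ 0)
      rw [hz]; ring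
    exact_mod_cast this
  have : z = 0 := by
    rw [hrz] at h0 h1
    have : (0 : ℤ) ≤ z := by exact_mod_cast h0
    have : z < (1 : ℤ) := by exact_mod_cast h1
    omega
  simpa [hrz, this] using hx

lemma stdChar_zero : stdChar p 0 = 1 := (stdChar_eq_one_iff 0).2 (by simp)

lemma stdChar_sum {ι : Type*} (s : Finset ι) (f : ι → ℚ_[p]) :
    stdChar p (∑ i ∈ s, f i) = ∏ i ∈ s, stdChar p (f i) := by
  induction s using Finset.cons_induction with
  | empty => simp [stdChar_zero]
  | cons i s hi ih => rw [sum_cons, prod_cons, stdChar_add, ih]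

lemma stdChar_natCast_mul (a : ℕ) (x : ℚ_[p]) : stdChar p (a * x) = stdChar p x ^ a := by
  simpa using stdChar_sum (range a) fun _ => x

lemma sum_range_stdChar_natCast_mul {k : ℕ} {x : ℚ_[p]} (hx : ‖x‖ ≤ (p : ℝ) ^ k) :
    ∑ a ∈ range (p ^ k), stdChar p (a * x) = if ‖x‖ ≤ 1 then (p : ℂ) ^ k else 0 := by
  simp_rw [stdChar_natCast_mul]
  split_ifs with h
  · simp [(stdChar_eq_one_iff x).2 h]
  · have hroot : stdChar p x ^ p ^ k = 1 := by
      rw [← stdChar_natCast_mul, stdChar_eq_one_iff, norm_mul, Nat.cast_pow, Padic.norm_p_pow,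
        zpow_neg, zpow_natCast, inv_mul_le_one₀ (pow_pos (by exact_mod_cast hp.out.pos) k)]
      exact hx
    rw [geom_sum_eq (mt (stdChar_eq_one_iff x).1 h), hroot, sub_self, zero_div]

lemma sum_piFinset_stdChar {n k : ℕ} {η : Fin n → ℚ_[p]} (hη : ‖η‖ ≤ (p : ℝ) ^ k) :
    ∑ a ∈ Fintype.piFinset (fun _ : Fin n => range (p ^ k)), stdChar p (∑ i, a i * η i) =
      if ‖η‖ ≤ 1 then (p : ℂ) ^ (k * n) else 0 := by
  simp_rw [stdChar_sum, ← Finset.prod_univ_sum (fun _ => range (p ^ k))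
    (fun i (a : ℕ) => stdChar p (a * η i))]
  rw [Fintype.prod_congr _ _ fun i => sum_range_stdChar_natCast_mul ((norm_le_pi_norm η i).trans hη),
    Fintype.prod_ite_zero, prod_const, card_univ, Fintype.card_fin, ← pow_mul]
  congr 1
  exact propext (pi_norm_le_iff_of_nonneg zero_le_one).symm

variable {n : ℕ}

lemma heisenbergOp_zero_right (x : Fin n → ℚ_[p]) (ψ : (Fin n → ℚ_[p]) → ℂ) :
    heisenbergOp p n x 0 ψ = fun ξ => ψ (ξ + x) := by
  ext ξ
  simp [heisenbergOp, stdChar_zero]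

lemma heisenbergOp_zero_left (y : Fin n → ℚ_[p]) (ψ : (Fin n → ℚ_[p]) → ℂ) :
    heisenbergOp p n 0 y ψ = fun ξ => ψ ξ * stdChar p (∑ i, y i * ξ i) := by
  ext ξ
  simp [heisenbergOp]

lemma heisenbergOp_indicator_closedBall (c c' : Fin n → ℚ_[p]) (r : ℝ) :
    heisenbergOp p n (c - c') 0 ((closedBall c r).indicator 1) = (closedBall c' r).indicator 1 := by
  ext ξ
  simp [heisenbergOp_zero_right, Set.indicator_apply, mem_closedBall, dist_eq_norm,
    show ξ + (c - c') - c = ξ - c' by abel]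

lemma sum_smul_heisenbergOp_zero_left (ψ : (Fin n → ℚ_[p]) → ℂ) (s : Finset (Fin n → ℕ))
    (t : ℚ_[p]) (ξ₀ : Fin n → ℚ_[p]) :
    ∑ a ∈ s, stdChar p (-∑ i, a i * (t * ξ₀ i)) • heisenbergOp p n 0 (fun i => a i * t) ψ =
      fun ξ => ψ ξ * ∑ a ∈ s, stdChar p (∑ i, a i * (t • (ξ - ξ₀)) i) := by
  ext ξ
  simp only [Finset.sum_apply, Pi.smul_apply, smul_eq_mul, heisenbergOp_zero_left, mul_sum]
  refine sum_congr rfl fun a _ => ?_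
  rw [mul_left_comm, ← stdChar_add, neg_add_eq_sub, ← sum_sub_distrib]
  congr 2
  refine sum_congr rfl fun i _ => ?_
  rw [Pi.sub_apply]
  ring

lemma indicator_closedBall_mem {V : Submodule ℂ ((Fin n → ℚ_[p]) → ℂ)}
    (hV : ∀ y, ∀ f ∈ V, heisenbergOp p n 0 y f ∈ V) {f : (Fin n → ℚ_[p]) → ℂ} (hfV : f ∈ V)
    (hf : HasCompactSupport f) {ξ₀ : Fin n → ℚ_[p]} (hfξ₀ : f ξ₀ ≠ 0) {t : ℚ_[p]} (ht : t ≠ 0)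
    (hconst : ∀ ξ ∈ closedBall ξ₀ ‖t‖⁻¹, f ξ = f ξ₀) :
    (closedBall ξ₀ ‖t‖⁻¹).indicator 1 ∈ V := by
  obtain ⟨R, hR⟩ := hf.isBounded.subset_closedBall ξ₀
  obtain ⟨k, hk⟩ := pow_unbounded_of_one_lt (‖t‖ * R)
    (Nat.one_lt_cast.mpr hp.out.one_lt)
  have hball : ∀ ξ, ‖t • (ξ - ξ₀)‖ ≤ 1 ↔ ξ ∈ closedBall ξ₀ ‖t‖⁻¹ := fun ξ => by
    rw [norm_smul, mem_closedBall, dist_eq_norm, ← le_inv_mul_iff₀ (norm_pos_iff.2 ht), mul_one]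
  have hsupp : ∀ ξ, f ξ ≠ 0 → ‖t • (ξ - ξ₀)‖ ≤ (p : ℝ) ^ k := fun ξ hξ => by
    rw [norm_smul, ← dist_eq_norm]
    exact (mul_le_mul_of_nonneg_left (hR (subset_tsupport f hξ)) (norm_nonneg t)).trans hk.le
  have havg : ∑ a ∈ Fintype.piFinset (fun _ : Fin n => range (p ^ k)),
      stdChar p (-∑ i, a i * (t * ξ₀ i)) • heisenbergOp p n 0 (fun i => a i * t) f =
        (f ξ₀ * (p : ℂ) ^ (k * n)) • (closedBall ξ₀ ‖t‖⁻¹).indicator 1 := by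
    rw [sum_smul_heisenbergOp_zero_left]
    ext ξ
    by_cases hξ : f ξ = 0
    · have : ξ ∉ closedBall ξ₀ ‖t‖⁻¹ := fun h => hfξ₀ (hconst ξ h ▸ hξ)
      simp [hξ, this]
    · rw [sum_piFinset_stdChar (hsupp ξ hξ)]
      by_cases h : ξ ∈ closedBall ξ₀ ‖t‖⁻¹ <;> simp [h, hball, hconst]
  have hC : f ξ₀ * (p : ℂ) ^ (k * n) ≠ 0 :=
    mul_ne_zero hfξ₀ (pow_ne_zero _ (Nat.cast_ne_zero.2 hp.out.ne_zero))
  have := V.smul_mem (f ξ₀ * (p : ℂ) ^ (k * n))⁻¹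
    (havg ▸ V.sum_mem fun a _ => V.smul_mem _ (hV _ f hfV))
  rwa [smul_smul, inv_mul_cancel₀ hC, one_smul] at this

lemma exists_indicator_closedBall_mem {V : Submodule ℂ ((Fin n → ℚ_[p]) → ℂ)}
    (hV : ∀ x y, ∀ f ∈ V, heisenbergOp p n x y f ∈ V) {f : (Fin n → ℚ_[p]) → ℂ} (hfV : f ∈ V)
    (hlc : IsLocallyConstant f) (hcs : HasCompactSupport f) (hf0 : f ≠ 0) {ε : ℝ} (hε : 0 < ε) :
    ∃ r, 0 < r ∧ r < ε ∧ ∀ c, (closedBall c r).indicator 1 ∈ V := by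
  obtain ⟨ξ₀, hξ₀⟩ := Function.ne_iff.mp hf0
  obtain ⟨δ, hδ, hfiber⟩ := Metric.isOpen_iff.mp (hlc.isOpen_fiber (f ξ₀)) ξ₀ rfl
  have hδε : 0 < min δ ε := lt_min hδ hε
  obtain ⟨t, ht⟩ := NormedField.exists_lt_norm ℚ_[p] (min δ ε)⁻¹
  have htpos : 0 < ‖t‖ := (inv_pos.2 hδε).trans ht
  have hr : ‖t‖⁻¹ < min δ ε := (inv_lt_comm₀ hδε htpos).1 ht
  refine ⟨‖t‖⁻¹, inv_pos.2 htpos, hr.trans_le (min_le_right _ _), fun c => ?_⟩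
  rw [← heisenbergOp_indicator_closedBall ξ₀ c]
  exact hV _ 0 _ <| indicator_closedBall_mem (hV 0) hfV hcs hξ₀ (norm_pos_iff.1 htpos)
    fun ξ hξ => hfiber (closedBall_subset_ball (hr.trans_le (min_le_left _ _)) hξ)

end PadicSchrodinger

open PadicSchrodinger in
/-- The Schrödinger representation on `𝒟(ℚ_p^n)` is irreducible: any nonzero subspace
of locally constant compactly supported functions invariant under all `T_z` equals
all of `𝒟(ℚ_p^n)`. -/
theorem schrodinger_irreducible (p : ℕ) [Fact p.Prime] (n : ℕ)
    (S : Set ((Fin n → ℚ_[p]) → ℂ))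
    (hD : ∀ f ∈ S, IsLocallyConstant f ∧ HasCompactSupport f)
    (hadd : ∀ f ∈ S, ∀ g ∈ S, f + g ∈ S)
    (hsmul : ∀ (c : ℂ), ∀ f ∈ S, c • f ∈ S)
    (hinv : ∀ (x y : Fin n → ℚ_[p]), ∀ f ∈ S, heisenbergOp p n x y f ∈ S)
    (hne : ∃ f ∈ S, f ≠ 0) :
    S = {f : (Fin n → ℚ_[p]) → ℂ | IsLocallyConstant f ∧ HasCompactSupport f} := by
  obtain ⟨f, hfS, hf0⟩ := hne
  let V : Submodule ℂ ((Fin n → ℚ_[p]) → ℂ) :=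
    { carrier := S
      add_mem' := fun hf hg => hadd _ hf _ hg
      zero_mem' := by simpa using hsmul 0 f hfS
      smul_mem' := hsmul }
  obtain ⟨hlc, hcs⟩ := hD f hfS
  refine Set.Subset.antisymm hD fun h ⟨hhlc, hhcs⟩ => hhlc.mem_of_hasCompactSupport (V := V) ?_ hhcs
  exact fun ε hε => exists_indicator_closedBall_mem (V := V) hinv hfS hlc hcs hf0 hε
end

section
/- Let f ∈ 𝒟(ℚ_p^{2n}) and define the Weyl operator W_f[ψ](ξ) = ∫ f̌(z) ψ(ξ+x) χ(∑_i (y_i ξ_i + x_i y_i/2)) d^{2n}z, where f̌ is the symplectic Fourier transform of f. Then W_f maps 𝒟(ℚ_p^n) into 𝒟(ℚ_p^n), i.e. W_f[ψ] is locally constant with compact support for every ψ ∈ 𝒟(ℚ_p^n). -/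
open Classical MeasureTheory

variable (p : ℕ) [Fact p.Prime] (n : ℕ) [MeasurableSpace ℚ_[p]] [BorelSpace ℚ_[p]]
  (μ : Measure (Fin n → ℚ_[p]))

/-- The symplectic Fourier transform `F_s[f](z) = ∫ χ(J₀(z,z′)) f(z′) d^{2n}z′` on
`ℚ_p^{2n} = ℚ_p^n × ℚ_p^n`. -/
noncomputable def symplFourier
    (f : (Fin n → ℚ_[p]) × (Fin n → ℚ_[p]) → ℂ)
    (z : (Fin n → ℚ_[p]) × (Fin n → ℚ_[p])) : ℂ :=
  ∫ w, stdChar p ((∑ i, z.1 i * w.2 i) - ∑ i, z.2 i * w.1 i) * f w ∂(μ.prod μ)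

/-- The Weyl operator
`W_f[ψ](ξ) = ∫ f̌(z) ψ(ξ+x) χ(∑ᵢ (yᵢξᵢ + xᵢyᵢ/2)) d^{2n}z` with symbol `f`. -/
noncomputable def weylOp
    (f : (Fin n → ℚ_[p]) × (Fin n → ℚ_[p]) → ℂ)
    (ψ : (Fin n → ℚ_[p]) → ℂ) (ξ : Fin n → ℚ_[p]) : ℂ :=
  ∫ z, symplFourier p n μ f z * ψ (ξ + z.1) *
      stdChar p (∑ i, (z.2 i * ξ i + z.1 i * z.2 i / 2)) ∂(μ.prod μ)

/-!
`f̌` is an integral over the compact set `supp f` of a function that is locally constant jointly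
in `(z, w)`, because `χ` is constant on cosets of `ℤ_p`; by the tube lemma such an integral is
locally constant in `z`. The same argument applies to `W_f[ψ](ξ)`, an integral over `supp f̌`.
Translating by a period `δ` of `f` gives `f̌(z) = χ(J₀(z, δ)) f̌(z)`, and all small enough `δ` are
periods of `f`; when `‖z‖` is large one of them has `J₀(z, δ) = 1/p`, where `χ ≠ 1`, so
`f̌(z) = 0`. Finally `W_f[ψ](ξ) = 0` unless `ξ ∈ supp ψ - x(supp f̌)`.
-/

open Filter Topology

section PadicFract

variable {p : ℕ} [Fact p.Prime]

variable (p) in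
/-- `ℤ[1/p]` as an additive subgroup of `ℚ`. -/
def ratAway : AddSubgroup ℚ where
  carrier := {r | ∃ k : ℕ, ∃ m : ℤ, r * (p : ℚ) ^ k = m}
  zero_mem' := ⟨0, 0, by simp⟩
  add_mem' := by
    rintro r s ⟨k, m, hr⟩ ⟨l, m', hs⟩
    refine ⟨k + l, m * p ^ l + m' * p ^ k, ?_⟩
    push_cast
    linear_combination (p : ℚ) ^ l * hr + (p : ℚ) ^ k * hs
  neg_mem' := by
    rintro r ⟨k, m, hr⟩
    exact ⟨k, -m, by push_cast; linear_combination -hr⟩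

theorem exists_int_eq_of_mem_ratAway_of_norm_le_one {r : ℚ} (hr : r ∈ ratAway p)
    (h : ‖(r : ℚ_[p])‖ ≤ 1) : ∃ b : ℤ, r = b := by
  obtain ⟨k, m, hm⟩ := hr
  have hm' : ((m : ℚ) : ℚ_[p]) = r * (p : ℚ_[p]) ^ k := by rw [← hm]; push_cast; rfl
  have hnorm : ‖(m : ℚ_[p])‖ ≤ (p : ℝ) ^ (-k : ℤ) := by
    rw [← Rat.cast_intCast, hm', norm_mul, Padic.norm_p_pow]
    exact mul_le_of_le_one_left (by positivity) h
  obtain ⟨b, rfl⟩ := (Padic.norm_int_le_pow_iff_dvd m k).1 hnorm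
  have hpk : (p : ℚ) ^ k ≠ 0 := pow_ne_zero k (Nat.cast_ne_zero.2 (Fact.out : p.Prime).ne_zero)
  refine ⟨b, mul_right_cancel₀ hpk ?_⟩
  rw [hm]
  push_cast
  ring

variable (p) in
def IsPadicFract (x : ℚ_[p]) (r : ℚ) : Prop :=
  0 ≤ r ∧ r < 1 ∧ r ∈ ratAway p ∧ ‖x - r‖ ≤ 1

theorem IsPadicFract.eq_of_norm_sub_le_one {x y : ℚ_[p]} {r s : ℚ} (hr : IsPadicFract p x r)
    (hs : IsPadicFract p y s) (hxy : ‖x - y‖ ≤ 1) : r = s := by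
  obtain ⟨hr0, hr1, hrp, hxr⟩ := hr
  obtain ⟨hs0, hs1, hsp, hys⟩ := hs
  have hnorm : ((r - s : ℚ) : ℚ_[p]) ∈ PadicInt.subring p := by
    have : ((r - s : ℚ) : ℚ_[p]) = (x - s) - (x - r) := by push_cast; ring
    rw [this, ← sub_add_sub_cancel x y s]
    exact sub_mem (add_mem hxy hys) hxr
  obtain ⟨b, hb⟩ := exists_int_eq_of_mem_ratAway_of_norm_le_one (sub_mem hrp hsp) hnorm
  have hb0 : b = 0 := by
    have h1 : (b : ℚ) < 1 := by linarith
    have h2 : (-1 : ℚ) < b := by linarith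
    norm_cast at h1 h2
    omega
  rwa [hb0, Int.cast_zero, sub_eq_zero] at hb

theorem exists_isPadicFract (x : ℚ_[p]) : ∃ r, IsPadicFract p x r := by
  have hp : (1 : ℝ) < p := by exact_mod_cast (Fact.out : p.Prime).one_lt
  have hp0 : (0 : ℚ) < p := by exact_mod_cast (Fact.out : p.Prime).pos
  obtain ⟨k, hk⟩ := pow_unbounded_of_one_lt ‖x‖ hp
  have hy : ‖(p : ℚ_[p]) ^ k * x‖ ≤ 1 := by
    rw [norm_mul, Padic.norm_p_pow, zpow_neg, zpow_natCast]
    exact inv_mul_le_one_of_le₀ hk.le (by positivity)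
  set y : ℤ_[p] := ⟨(p : ℚ_[p]) ^ k * x, hy⟩
  set a := y.appr k
  have hya : ‖y - a‖ ≤ (p : ℝ) ^ (-k : ℤ) :=
    (PadicInt.norm_le_pow_iff_mem_span_pow _ k).2 (y.appr_spec k)
  refine ⟨a / (p : ℚ) ^ k, by positivity, ?_, ⟨k, a, ?_⟩, ?_⟩
  · rw [div_lt_one (by positivity)]
    exact_mod_cast y.appr_lt k
  · rw [div_mul_cancel₀ _ (by positivity)]; rfl
  · have hxa : x - ((a / (p : ℚ) ^ k : ℚ) : ℚ_[p]) = (y - a : ℤ_[p]) * ((p : ℚ_[p]) ^ k)⁻¹ := by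
      have hyx : (y : ℚ_[p]) = p ^ k * x := rfl
      have hp' : (p : ℚ_[p]) ≠ 0 := by exact_mod_cast hp0.ne'
      push_cast
      rw [hyx]
      field_simp
    rw [hxa, norm_mul, norm_inv, Padic.norm_p_pow, PadicInt.padic_norm_e_of_padicInt]
    exact mul_inv_le_one_of_le₀ hya (by positivity)

theorem isPadicFract_padicFract (x : ℚ_[p]) : IsPadicFract p x (padicFract p x) := by
  unfold padicFract
  split_ifs with h
  · exact h.choose_spec
  · exact absurd (exists_isPadicFract x) h

theorem padicFract_eq_of_norm_sub_le_one {x y : ℚ_[p]} (h : ‖x - y‖ ≤ 1) :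
    padicFract p x = padicFract p y :=
  (isPadicFract_padicFract x).eq_of_norm_sub_le_one (isPadicFract_padicFract y) h

end PadicFract

section StdChar

variable {p : ℕ} [Fact p.Prime]

theorem stdChar_eq_of_norm_sub_le_one {x y : ℚ_[p]} (h : ‖x - y‖ ≤ 1) :
    stdChar p x = stdChar p y := by
  rw [stdChar, stdChar, padicFract_eq_of_norm_sub_le_one h]

theorem isLocallyConstant_stdChar : IsLocallyConstant (stdChar p) :=
  (IsLocallyConstant.iff_eventually_eq _).2 fun x ↦
    Filter.mem_of_superset (Metric.closedBall_mem_nhds x one_pos) fun _ hy ↦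
      stdChar_eq_of_norm_sub_le_one (by rwa [← dist_eq_norm])

theorem stdChar_add (x y : ℚ_[p]) : stdChar p (x + y) = stdChar p x * stdChar p y := by
  obtain ⟨-, -, hr, hxr⟩ := isPadicFract_padicFract x
  obtain ⟨-, -, hs, hys⟩ := isPadicFract_padicFract y
  obtain ⟨-, -, ht, hxyt⟩ := isPadicFract_padicFract (x + y)
  set r := padicFract p x
  set s := padicFract p y
  set t := padicFract p (x + y)
  have hnorm : ((r + s - t : ℚ) : ℚ_[p]) ∈ PadicInt.subring p := by
    rw [show ((r + s - t : ℚ) : ℚ_[p]) = (x + y - t) - (x - r) - (y - s) by push_cast; ring]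
    exact sub_mem (sub_mem hxyt hxr) hys
  obtain ⟨b, hb⟩ :=
    exists_int_eq_of_mem_ratAway_of_norm_le_one (sub_mem (add_mem hr hs) ht) hnorm
  have hrs : (r : ℂ) + s = t + b := by exact_mod_cast (by linarith : r + s = t + b)
  rw [stdChar, stdChar, stdChar, ← Complex.exp_add, ← mul_add, hrs, mul_add, Complex.exp_add,
    mul_comm _ (b : ℂ), Complex.exp_int_mul_two_pi_mul_I, mul_one]

theorem stdChar_ne_one_of_one_lt_norm {x : ℚ_[p]} (h : 1 < ‖x‖) : stdChar p x ≠ 1 := by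
  obtain ⟨-, -, -, hxr⟩ := isPadicFract_padicFract x
  intro hx
  obtain ⟨m, hm⟩ := Complex.exp_eq_one_iff.1 hx
  have hrm : padicFract p x = m := by
    have : (padicFract p x : ℂ) = m :=
      mul_left_cancel₀ Complex.two_pi_I_ne_zero (by rw [hm]; ring)
    exact_mod_cast this
  rw [hrm, Rat.cast_intCast] at hxr
  have hx : x ∈ PadicInt.subring p := by
    rw [← sub_add_cancel x (m : ℚ_[p])]
    exact add_mem hxr (Padic.norm_int_le_one m)
  exact h.not_ge hx

end StdChar

section LocallyConstant

variable {X Y : Type*} [TopologicalSpace X] [TopologicalSpace Y]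

theorem IsLocallyConstant.eventually_forall_eq_of_isCompact {Z : Type*} {Φ : X → Y → Z}
    (hΦ : IsLocallyConstant (Function.uncurry Φ)) {K : Set Y} (hK : IsCompact K) (x₀ : X) :
    ∀ᶠ x in 𝓝 x₀, ∀ y ∈ K, Φ x y = Φ x₀ y := by
  refine hK.eventually_forall_of_forall_eventually fun y _ ↦ ?_
  have hq := hΦ.eventually_eq (x₀, y)
  have hq₀ : ∀ᶠ q : X × Y in 𝓝 (x₀, y), Φ x₀ q.2 = Φ x₀ y :=
    ((continuous_const.prodMk continuous_snd).tendsto (x₀, y)).eventually hq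
  filter_upwards [hq, hq₀] with q h h₀
  exact h.trans h₀.symm

theorem IsLocallyConstant.integral {E : Type*} [NormedAddCommGroup E] [NormedSpace ℝ E]
    [MeasurableSpace Y] {G : X → Y → E} (hG : IsLocallyConstant (Function.uncurry G))
    {K : Set Y} (hK : IsCompact K) (hGK : ∀ x, ∀ y ∉ K, G x y = 0) (ν : Measure Y) :
    IsLocallyConstant fun x ↦ ∫ y, G x y ∂ν := by
  refine (IsLocallyConstant.iff_eventually_eq _).2 fun x₀ ↦ ?_
  filter_upwards [hG.eventually_forall_eq_of_isCompact hK x₀] with x hx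
  congr 1 with y
  by_cases hy : y ∈ K
  · exact hx y hy
  · rw [hGK x y hy, hGK x₀ y hy]

theorem IsLocallyConstant.eventually_forall_add_eq {G M : Type*} [AddGroup G]
    [TopologicalSpace G] [IsTopologicalAddGroup G] [Zero M] {g : G → M}
    (hg : IsLocallyConstant g) (hgc : HasCompactSupport g) :
    ∀ᶠ δ in 𝓝 0, ∀ x, g (x + δ) = g x := by
  have hadd := IsLocallyConstant.eventually_forall_eq_of_isCompact (Φ := fun δ x ↦ g (x + δ))
    (hg.comp_continuous (continuous_snd.add continuous_fst)) hgc 0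
  have hsub := IsLocallyConstant.eventually_forall_eq_of_isCompact (Φ := fun δ x ↦ g (x - δ))
    (hg.comp_continuous (continuous_snd.sub continuous_fst)) hgc 0
  filter_upwards [hadd, hsub] with δ hadd hsub x
  by_cases hx : x ∈ tsupport g
  · simpa using hadd x hx
  by_cases hxδ : x + δ ∈ tsupport g
  · simpa using (hsub _ hxδ).symm
  rw [image_eq_zero_of_notMem_tsupport hx, image_eq_zero_of_notMem_tsupport hxδ]

end LocallyConstant

section Symplectic

def symplForm {R ι : Type*} [CommRing R] [Fintype ι] (z w : (ι → R) × (ι → R)) : R :=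
  z.1 ⬝ᵥ w.2 - z.2 ⬝ᵥ w.1

theorem symplForm_add_right {R ι : Type*} [CommRing R] [Fintype ι] (z w w' : (ι → R) × (ι → R)) :
    symplForm z (w + w') = symplForm z w + symplForm z w' := by
  simp only [symplForm, Prod.fst_add, Prod.snd_add, dotProduct_add]
  ring

variable {K ι : Type*} [NormedField K] [Fintype ι] [DecidableEq ι]

theorem exists_dotProduct_eq_of_lt_norm (c : K) {ε : ℝ} (hε : 0 < ε)
    {v : ι → K} (hv : ‖c‖ / ε < ‖v‖) : ∃ u : ι → K, ‖u‖ < ε ∧ v ⬝ᵥ u = c := by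
  obtain ⟨i, hi⟩ : ∃ i, ‖c‖ / ε < ‖v i‖ := by
    by_contra! h
    exact hv.not_ge ((pi_norm_le_iff_of_nonneg (by positivity)).2 h)
  have hvi : v i ≠ 0 := norm_pos_iff.1 ((by positivity : 0 ≤ ‖c‖ / ε).trans_lt hi)
  refine ⟨Pi.single i (c / v i), ?_, by rw [dotProduct_single, mul_div_cancel₀ _ hvi]⟩
  rw [Pi.norm_single, norm_div, div_lt_iff₀ (norm_pos_iff.2 hvi)]
  rwa [div_lt_iff₀' hε] at hi

theorem exists_symplForm_eq_of_lt_norm (c : K) {ε : ℝ} (hε : 0 < ε)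
    {z : (ι → K) × (ι → K)} (hz : ‖c‖ / ε < ‖z‖) :
    ∃ δ : (ι → K) × (ι → K), ‖δ‖ < ε ∧ symplForm z δ = c := by
  rcases lt_max_iff.1 (Prod.norm_def z ▸ hz) with h | h
  · obtain ⟨u, hu, huc⟩ := exists_dotProduct_eq_of_lt_norm c hε h
    exact ⟨(0, u), by simpa [Prod.norm_def] using hu, by simp [symplForm, huc]⟩
  · obtain ⟨u, hu, huc⟩ := exists_dotProduct_eq_of_lt_norm (-c) hε (by rwa [norm_neg])
    exact ⟨(u, 0), by simpa [Prod.norm_def] using hu, by simp [symplForm, huc]⟩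

end Symplectic

section Weyl

variable {p : ℕ} [Fact p.Prime] {n : ℕ} [MeasurableSpace ℚ_[p]] (μ : Measure (Fin n → ℚ_[p]))
  {f : (Fin n → ℚ_[p]) × (Fin n → ℚ_[p]) → ℂ} {ψ : (Fin n → ℚ_[p]) → ℂ}

theorem isLocallyConstant_symplFourier (hf : IsLocallyConstant f) (hfc : HasCompactSupport f) :
    IsLocallyConstant (symplFourier p n μ f) := by
  refine IsLocallyConstant.integral ?_ hfc.isCompact
    (fun _ w hw ↦ by rw [image_eq_zero_of_notMem_tsupport hw, mul_zero]) _
  exact (isLocallyConstant_stdChar.comp_continuous (by fun_prop)).mul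
    (hf.comp_continuous continuous_snd)

theorem symplFourier_eq_stdChar_mul_of_add_eq [BorelSpace ℚ_[p]] [μ.IsAddRightInvariant]
    [SFinite μ] {δ : (Fin n → ℚ_[p]) × (Fin n → ℚ_[p])} (hδ : ∀ w, f (w + δ) = f w)
    (z : (Fin n → ℚ_[p]) × (Fin n → ℚ_[p])) :
    symplFourier p n μ f z = stdChar p (symplForm z δ) * symplFourier p n μ f z := by
  calc symplFourier p n μ f z
      = ∫ w, stdChar p (symplForm z (w + δ)) * f (w + δ) ∂(μ.prod μ) :=
        (integral_add_right_eq_self (fun w ↦ stdChar p (symplForm z w) * f w) δ).symm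
    _ = ∫ w, stdChar p (symplForm z δ) * (stdChar p (symplForm z w) * f w) ∂(μ.prod μ) := by
        congr 1 with w
        rw [hδ, symplForm_add_right, stdChar_add]
        ring
    _ = stdChar p (symplForm z δ) * symplFourier p n μ f z := integral_const_mul _ _

theorem hasCompactSupport_symplFourier [BorelSpace ℚ_[p]] [μ.IsAddRightInvariant] [SFinite μ]
    (hf : IsLocallyConstant f) (hfc : HasCompactSupport f) :
    HasCompactSupport (symplFourier p n μ f) := by
  obtain ⟨ε, hε, hper⟩ := Metric.eventually_nhds_iff.1 (hf.eventually_forall_add_eq hfc)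
  have hp : (1 : ℝ) < ‖(p⁻¹ : ℚ_[p])‖ := by
    rw [norm_inv, Padic.norm_p, inv_inv]
    exact_mod_cast (Fact.out : p.Prime).one_lt
  refine HasCompactSupport.intro (isCompact_closedBall 0 (‖(p⁻¹ : ℚ_[p])‖ / ε))
    fun z hz ↦ ?_
  obtain ⟨δ, hδ, hJ⟩ := exists_symplForm_eq_of_lt_norm (p⁻¹ : ℚ_[p]) hε (z := z)
    (by simpa using hz)
  by_contra hF
  refine stdChar_ne_one_of_one_lt_norm hp (hJ ▸ (mul_eq_right₀ hF).1 ?_)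
  exact (symplFourier_eq_stdChar_mul_of_add_eq μ (hper (by simpa using hδ)) z).symm

theorem isLocallyConstant_weylOp (hF : IsLocallyConstant (symplFourier p n μ f))
    (hFc : HasCompactSupport (symplFourier p n μ f)) (hψ : IsLocallyConstant ψ) :
    IsLocallyConstant (weylOp p n μ f ψ) := by
  refine IsLocallyConstant.integral ?_ hFc.isCompact
    (fun _ z hz ↦ by rw [image_eq_zero_of_notMem_tsupport hz, zero_mul, zero_mul]) _
  exact ((hF.comp_continuous continuous_snd).mul (hψ.comp_continuous (by fun_prop))).mul
    (isLocallyConstant_stdChar.comp_continuous (by fun_prop))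

theorem hasCompactSupport_weylOp (hFc : HasCompactSupport (symplFourier p n μ f))
    (hψc : HasCompactSupport ψ) : HasCompactSupport (weylOp p n μ f ψ) := by
  refine HasCompactSupport.intro
    (hψc.isCompact.add (hFc.isCompact.image (continuous_neg.comp continuous_fst))) fun ξ hξ ↦ ?_
  have hvanish : ∀ z, symplFourier p n μ f z * ψ (ξ + z.1) = 0 := fun z ↦ by
    by_contra h
    obtain ⟨hFz, hψz⟩ := mul_ne_zero_iff.1 h
    exact hξ ⟨_, subset_tsupport _ hψz, _, ⟨z, subset_tsupport _ hFz, rfl⟩,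
      add_neg_cancel_right _ _⟩
  simp [weylOp, hvanish]

end Weyl

theorem weylOp_maps_test_functions [μ.IsAddHaarMeasure]
    (f : (Fin n → ℚ_[p]) × (Fin n → ℚ_[p]) → ℂ)
    (hf : IsLocallyConstant f) (hfc : HasCompactSupport f)
    (ψ : (Fin n → ℚ_[p]) → ℂ)
    (hψ : IsLocallyConstant ψ) (hψc : HasCompactSupport ψ) :
    IsLocallyConstant (weylOp p n μ f ψ) ∧ HasCompactSupport (weylOp p n μ f ψ) := by
  have hFc := hasCompactSupport_symplFourier μ hf hfc
  exact ⟨isLocallyConstant_weylOp μ (isLocallyConstant_symplFourier μ hf hfc) hFc hψ,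
    hasCompactSupport_weylOp μ hFc hψc⟩
end
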